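/- For all integers n ≥ 2 and r ≥ 1, La(n, B, D_r) = C(C(n, ⌊n/2⌋), r): the maximum number of copies of the generalized diamond D_r over all B-free families ℱ ⊆ 2^[n] equals the binomial coefficient C(M, r) with M = C(n, ⌊n/2⌋). -/

import Mathlib

open Classical Finset

noncomputable section

/-- `G` is a copy of the finite poset `α` among the subsets of `[n]`:
there is a bijection `φ` from `α` onto `G` such that `x ≤ y` implies `φ x ⊆ φ y`. -/
def IsCopy (α : Type) [PartialOrder α] [Fintype α] {n : ℕ}
    (G : Finset (Finset (Fin n))) : Prop :=
  ∃ φ : α → Finset (Fin n), Function.Injective φ ∧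
    Finset.image φ Finset.univ = G ∧ ∀ x y : α, x ≤ y → φ x ⊆ φ y

/-- `copyCount α F` is the number of copies of the poset `α` in the family `F`,
copies being counted as subfamilies of `F`. -/
def copyCount (α : Type) [PartialOrder α] [Fintype α] {n : ℕ}
    (F : Finset (Finset (Fin n))) : ℕ :=
  (F.powerset.filter fun G => IsCopy α G).card

/-- `La n P Q`: the maximum number of copies of `Q` in a `P`-free family of subsets of `[n]`. -/
def La (n : ℕ) (P Q : Type) [PartialOrder P] [Fintype P]
    [PartialOrder Q] [Fintype Q] : ℕ :=
  ((Finset.univ : Finset (Finset (Finset (Fin n)))).filter fun F =>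
    copyCount P F = 0).sup (copyCount Q)

/-- `La2 n P₁ P₂ Q`: the maximum number of copies of `Q` in a family of subsets of `[n]`
that is both `P₁`-free and `P₂`-free. -/
def La2 (n : ℕ) (P₁ P₂ Q : Type) [PartialOrder P₁] [Fintype P₁]
    [PartialOrder P₂] [Fintype P₂] [PartialOrder Q] [Fintype Q] : ℕ :=
  ((Finset.univ : Finset (Finset (Finset (Fin n)))).filter fun F =>
    copyCount P₁ F = 0 ∧ copyCount P₂ F = 0).sup (copyCount Q)

/-- the full `k`-th level of `2^[n]`. -/
def level (n k : ℕ) : Finset (Finset (Fin n)) :=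
  Finset.univ.filter fun A => A.card = k

/-- `γ^r_{i,j}(F)`: the number of `r`-element subfamilies of `F` whose intersection has
size `i` and whose union has size `j`. -/
def gammaCount (r n i j : ℕ) (F : Finset (Finset (Fin n))) : ℕ :=
  (F.powerset.filter fun G =>
    G.card = r ∧ (G.inf id).card = i ∧ (G.sup id).card = j).card

/-- `β^r_i(F)`: the number of `r`-element subfamilies of `F` whose intersection has size `i`. -/
def betaCount (r n i : ℕ) (F : Finset (Finset (Fin n))) : ℕ :=
  (F.powerset.filter fun G => G.card = r ∧ (G.inf id).card = i).card

/-- the complete multi-level poset `K_{r 0, …, r (s-1)}`: level `i` has `r i` elements,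
and every element of level `i` is below every element of level `j` whenever `i < j`. -/
def KP {s : ℕ} (r : Fin s → ℕ) : Type := Σ i, Fin (r i)

namespace KP

variable {s : ℕ} {r : Fin s → ℕ}

def le (x y : KP r) : Prop := x = y ∨ x.1 < y.1

instance : PartialOrder (KP r) where
  le := KP.le
  le_refl x := Or.inl rfl
  le_trans x y z hxy hyz := by
    rcases hxy with rfl | h
    · exact hyz
    · rcases hyz with rfl | h'
      · exact Or.inr h
      · exact Or.inr (h.trans h')
  le_antisymm x y hxy hyx := by
    rcases hxy with rfl | h
    · rfl
    · rcases hyx with rfl | h'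
      · rfl
      · exact absurd (h.trans h') (lt_irrefl _)

instance : Fintype (KP r) := inferInstanceAs (Fintype (Σ i, Fin (r i)))

end KP

/-- the chain (totally ordered poset) with `k` elements. -/
abbrev PChain (k : ℕ) := Fin k

/-- `∨_r = K_{1,r}` -/
abbrev VeePoset (r : ℕ) := KP ![1, r]

/-- `∧_r = K_{r,1}` -/
abbrev WedgePoset (r : ℕ) := KP ![r, 1]

/-- the generalized diamond `D_r = K_{1,r,1}` -/
abbrev DiamondPoset (r : ℕ) := KP ![1, r, 1]

/-- the butterfly poset `B = K_{2,2}` -/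
abbrev Butterfly := KP ![2, 2]

/-- the height `l(Q)` of a finite poset: the number of elements of a longest chain. -/
def height (Q : Type) [PartialOrder Q] [Fintype Q] : ℕ :=
  ((Finset.univ : Finset (Finset Q)).filter fun C : Finset Q =>
    IsChain (· ≤ ·) (↑C : Set Q)).sup Finset.card


/-- `Q₁ ⊗_r Q₂`: disjoint copies of `Q₁` and `Q₂` with an `r`-element antichain in between;
everything in `Q₁` is below the middle elements and below everything in `Q₂`,
and the middle elements are below everything in `Q₂`. -/
inductive Otimes (Q₁ Q₂ : Type) (r : ℕ) : Type
  | bot : Q₁ → Otimes Q₁ Q₂ r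
  | mid : Fin r → Otimes Q₁ Q₂ r
  | top : Q₂ → Otimes Q₁ Q₂ r

namespace Otimes

variable {Q₁ Q₂ : Type} {r : ℕ}

def le [PartialOrder Q₁] [PartialOrder Q₂] : Otimes Q₁ Q₂ r → Otimes Q₁ Q₂ r → Prop
  | bot a, bot b => a ≤ b
  | bot _, mid _ => True
  | bot _, top _ => True
  | mid i, mid j => i = j
  | mid _, top _ => True
  | top a, top b => a ≤ b
  | _, _ => False

instance [PartialOrder Q₁] [PartialOrder Q₂] : PartialOrder (Otimes Q₁ Q₂ r) where
  le := Otimes.le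
  le_refl x := by cases x <;> simp [Otimes.le]
  le_trans x y z hxy hyz := by
    cases x <;> cases y <;> cases z <;> simp_all [Otimes.le] <;>
      first
        | exact le_trans hxy hyz
        | trivial
  le_antisymm x y hxy hyx := by
    cases x <;> cases y <;> simp_all [Otimes.le] <;>
      first
        | exact le_antisymm hxy hyx
        | rfl

instance [Fintype Q₁] [Fintype Q₂] : Fintype (Otimes Q₁ Q₂ r) :=
  Fintype.ofEquiv (Q₁ ⊕ Fin r ⊕ Q₂)
    { toFun := fun x => match x with
        | Sum.inl a => bot a
        | Sum.inr (Sum.inl i) => mid i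
        | Sum.inr (Sum.inr b) => top b
      invFun := fun x => match x with
        | bot a => Sum.inl a
        | mid i => Sum.inr (Sum.inl i)
        | top b => Sum.inr (Sum.inr b)
      left_inv := fun x => by rcases x with a | (i | b) <;> rfl
      right_inv := fun x => by cases x <;> rfl }

end Otimes

/-- `Q ⊕ r`: the poset obtained from `Q` by adding an antichain of `r` new elements,
each above every element of `Q`. -/
inductive Oplus (Q : Type) (r : ℕ) : Type
  | base : Q → Oplus Q r
  | new : Fin r → Oplus Q r

namespace Oplus

variable {Q : Type} {r : ℕ}

def le [PartialOrder Q] : Oplus Q r → Oplus Q r → Prop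
  | base a, base b => a ≤ b
  | base _, new _ => True
  | new i, new j => i = j
  | new _, base _ => False

instance [PartialOrder Q] : PartialOrder (Oplus Q r) where
  le := Oplus.le
  le_refl x := by cases x <;> simp [Oplus.le]
  le_trans x y z hxy hyz := by
    cases x <;> cases y <;> cases z <;> simp_all [Oplus.le] <;>
      first
        | exact le_trans hxy hyz
        | trivial
  le_antisymm x y hxy hyx := by
    cases x <;> cases y <;> simp_all [Oplus.le] <;>
      first
        | exact le_antisymm hxy hyx
        | rfl

instance [Fintype Q] : Fintype (Oplus Q r) :=
  Fintype.ofEquiv (Q ⊕ Fin r)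
    { toFun := fun x => match x with
        | Sum.inl a => base a
        | Sum.inr i => new i
      invFun := fun x => match x with
        | base a => Sum.inl a
        | new i => Sum.inr i
      left_inv := fun x => by rcases x with a | i <;> rfl
      right_inv := fun x => by cases x <;> rfl }

end Oplus

/-- the poset `N`: four elements `a, b, c, d` with `a ≤ c`, `b ≤ c`, `b ≤ d`
and no other nontrivial relations. -/
inductive NPoset : Type
  | a | b | c | d
  deriving DecidableEq

instance instFintypeNPoset : Fintype NPoset :=
  ⟨{NPoset.a, NPoset.b, NPoset.c, NPoset.d}, fun x => by cases x <;> simp⟩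

namespace NPoset

def le : NPoset → NPoset → Prop := fun x y =>
  x = y ∨ (x = a ∧ y = c) ∨ (x = b ∧ y = c) ∨ (x = b ∧ y = d)

instance : DecidableRel le := fun x y => by unfold le; infer_instance

theorem le_refl' : ∀ x : NPoset, le x x := by decide
theorem le_trans' : ∀ x y z : NPoset, le x y → le y z → le x z := by decide
theorem le_antisymm' : ∀ x y : NPoset, le x y → le y x → x = y := by decide

instance : PartialOrder NPoset :=
  { le := le, le_refl := le_refl', le_trans := le_trans', le_antisymm := le_antisymm' }

end NPoset

/-- the poset `B⁺`: five elements with `a < c`, `a < e`, `b < c`, `b < d`, `d < e`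
(and the relation `b < e` forced by transitivity). -/
inductive BPlusPoset : Type
  | a | b | c | d | e
  deriving DecidableEq

instance instFintypeBPlusPoset : Fintype BPlusPoset :=
  ⟨{BPlusPoset.a, BPlusPoset.b, BPlusPoset.c, BPlusPoset.d, BPlusPoset.e}, fun x => by cases x <;> simp⟩

namespace BPlusPoset

def le : BPlusPoset → BPlusPoset → Prop := fun x y =>
  x = y ∨ (x = a ∧ y = c) ∨ (x = a ∧ y = e) ∨ (x = b ∧ y = c) ∨ (x = b ∧ y = d) ∨
    (x = b ∧ y = e) ∨ (x = d ∧ y = e)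

instance : DecidableRel le := fun x y => by unfold le; infer_instance

theorem le_refl' : ∀ x : BPlusPoset, le x x := by decide
theorem le_trans' : ∀ x y z : BPlusPoset, le x y → le y z → le x z := by decide
theorem le_antisymm' : ∀ x y : BPlusPoset, le x y → le y x → x = y := by decide

instance : PartialOrder BPlusPoset :=
  { le := le, le_refl := le_refl', le_trans := le_trans', le_antisymm := le_antisymm' }

end BPlusPoset

/-- the poset `B⁺⁺`: five elements with `a, b < c, d` and `d < e`
(hence also `a < e` and `b < e`). -/
inductive BPlusPlusPoset : Type
  | a | b | c | d | e
  deriving DecidableEq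

instance instFintypeBPlusPlusPoset : Fintype BPlusPlusPoset :=
  ⟨{BPlusPlusPoset.a, BPlusPlusPoset.b, BPlusPlusPoset.c, BPlusPlusPoset.d, BPlusPlusPoset.e}, fun x => by cases x <;> simp⟩

namespace BPlusPlusPoset

def le : BPlusPlusPoset → BPlusPlusPoset → Prop := fun x y =>
  x = y ∨ (x = a ∧ y = c) ∨ (x = a ∧ y = d) ∨ (x = a ∧ y = e) ∨ (x = b ∧ y = c) ∨
    (x = b ∧ y = d) ∨ (x = b ∧ y = e) ∨ (x = d ∧ y = e)

instance : DecidableRel le := fun x y => by unfold le; infer_instance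

theorem le_refl' : ∀ x : BPlusPlusPoset, le x x := by decide
theorem le_trans' : ∀ x y z : BPlusPlusPoset, le x y → le y z → le x z := by decide
theorem le_antisymm' : ∀ x y : BPlusPlusPoset, le x y → le y x → x = y := by decide

instance : PartialOrder BPlusPlusPoset :=
  { le := le, le_refl := le_refl', le_trans := le_trans', le_antisymm := le_antisymm' }

end BPlusPlusPoset

/-- the binary entropy function `h(x) = -x log₂ x - (1-x) log₂ (1-x)`. -/
def binEnt (x : ℝ) : ℝ := -x * Real.logb 2 x - (1 - x) * Real.logb 2 (1 - x)


/-! In a butterfly-free family `F`, the members lying strictly between two other members form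
an antichain, since a chain `a ⊂ x ⊂ y ⊂ c` contains the butterfly `a, x ⊆ y, c`; by Sperner there
are at most `C(n, ⌊n/2⌋)` of them. A copy of `D_r` in `F` is determined by its `r ≥ 1` middle
sets: two copies sharing a middle set `x` but with bottoms `a₁ ≠ a₂` contain the butterfly
`a₁, a₂ ⊆ x, c₁`, and dually for the tops. This gives `c(D_r, F) ≤ C(C(n, ⌊n/2⌋), r)`, which is
attained by the middle level together with `∅` and `[n]`. -/

section Butterfly

variable {α : Type*} [PartialOrder α]

def HasButterfly (F : Finset α) : Prop :=
  ∃ a ∈ F, ∃ b ∈ F, ∃ c ∈ F, ∃ d ∈ F, a ≠ b ∧ c ≠ d ∧ a < c ∧ a < d ∧ b < c ∧ b < d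

lemma not_hasButterfly_of_lt_imp {F : Finset α} {u v : α}
    (h : ∀ x ∈ F, ∀ y ∈ F, x < y → x = u ∨ y = v) : ¬ HasButterfly F := by
  rintro ⟨a, ha, b, hb, c, hc, d, hd, hab, hcd, hac, had, hbc, hbd⟩
  have bottom_eq : ∀ x ∈ F, x < c → x < d → x = u := fun x hx hxc hxd => by
    by_contra hxu
    exact hcd (((h x hx c hc hxc).resolve_left hxu).trans
      ((h x hx d hd hxd).resolve_left hxu).symm)
  exact hab ((bottom_eq a ha hac had).trans (bottom_eq b hb hbc hbd).symm)

def middle (F : Finset α) : Finset α :=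
  F.filter fun x => (∃ a ∈ F, a < x) ∧ ∃ c ∈ F, x < c

lemma mem_middle {F : Finset α} {x : α} :
    x ∈ middle F ↔ x ∈ F ∧ (∃ a ∈ F, a < x) ∧ ∃ c ∈ F, x < c :=
  mem_filter

lemma middle_subset (F : Finset α) : middle F ⊆ F :=
  filter_subset _ _

lemma middle_mono {F G : Finset α} (h : G ⊆ F) : middle G ⊆ middle F := by
  intro x hx
  obtain ⟨hx, ⟨a, ha, hax⟩, c, hc, hxc⟩ := mem_middle.mp hx
  exact mem_middle.mpr ⟨h hx, ⟨a, h ha, hax⟩, c, h hc, hxc⟩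

lemma isAntichain_middle {F : Finset α} (hF : ¬ HasButterfly F) :
    IsAntichain (· ≤ ·) (middle F : Set α) := by
  intro x hx y hy hne hxy
  obtain ⟨hxF, ⟨a, haF, hax⟩, -⟩ := mem_middle.mp hx
  obtain ⟨hyF, -, c, hcF, hyc⟩ := mem_middle.mp hy
  have hxy := lt_of_le_of_ne hxy hne
  exact hF ⟨a, haF, x, hxF, y, hyF, c, hcF, hax.ne, hyc.ne, hax.trans hxy,
    hax.trans (hxy.trans hyc), hxy, hxy.trans hyc⟩

lemma eq_and_eq_of_lt_of_lt {F : Finset α} (hF : ¬ HasButterfly F) {a₁ a₂ x c₁ c₂ : α}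
    (ha₁ : a₁ ∈ F) (ha₂ : a₂ ∈ F) (hx : x ∈ F) (hc₁ : c₁ ∈ F) (hc₂ : c₂ ∈ F)
    (hax₁ : a₁ < x) (hxc₁ : x < c₁) (hax₂ : a₂ < x) (hxc₂ : x < c₂) :
    a₁ = a₂ ∧ c₁ = c₂ := by
  constructor
  · by_contra hne
    exact hF ⟨a₁, ha₁, a₂, ha₂, x, hx, c₁, hc₁, hne, hxc₁.ne, hax₁, hax₁.trans hxc₁,
      hax₂, hax₂.trans hxc₁⟩
  · by_contra hne
    exact hF ⟨a₁, ha₁, x, hx, c₁, hc₁, c₂, hc₂, hax₁.ne, hne, hax₁.trans hxc₁,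
      hax₁.trans hxc₂, hxc₁, hxc₂⟩

variable {G : Finset α} {a c : α}

lemma lt_and_lt_of_mem_middle (ha : IsLeast (G : Set α) a) (hc : IsGreatest (G : Set α) c)
    {x : α} (hx : x ∈ middle G) : a < x ∧ x < c := by
  obtain ⟨-, ⟨a', ha', ha'x⟩, c', hc', hxc'⟩ := mem_middle.mp hx
  exact ⟨lt_of_le_of_lt (ha.2 ha') ha'x, lt_of_lt_of_le hxc' (hc.2 hc')⟩

variable [DecidableEq α]

lemma middle_eq_erase_erase (ha : IsLeast (G : Set α) a) (hc : IsGreatest (G : Set α) c) :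
    middle G = (G.erase a).erase c := by
  ext x
  simp only [mem_middle, mem_erase]
  constructor
  · intro hx
    obtain ⟨hax, hxc⟩ := lt_and_lt_of_mem_middle ha hc (mem_middle.mpr hx)
    exact ⟨hxc.ne, hax.ne', hx.1⟩
  · rintro ⟨hxc, hxa, hx⟩
    exact ⟨hx, ⟨a, ha.1, lt_of_le_of_ne (ha.2 hx) (Ne.symm hxa)⟩,
      c, hc.1, lt_of_le_of_ne (hc.2 hx) hxc⟩

lemma insert_insert_middle (ha : IsLeast (G : Set α) a) (hc : IsGreatest (G : Set α) c) :
    insert a (insert c (middle G)) = G := by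
  ext x
  simp only [middle_eq_erase_erase ha hc, mem_insert, mem_erase]
  constructor
  · rintro (rfl | rfl | ⟨-, -, hx⟩)
    exacts [ha.1, hc.1, hx]
  · tauto

lemma card_middle (hac : a ≠ c) (ha : IsLeast (G : Set α) a) (hc : IsGreatest (G : Set α) c) :
    #(middle G) + 2 = #G := by
  have two_le : #{a, c} ≤ #G := card_le_card <| by
    rw [insert_subset_iff, singleton_subset_iff]
    exact ⟨ha.1, hc.1⟩
  rw [card_pair hac] at two_le
  rw [middle_eq_erase_erase ha hc, card_erase_of_mem (mem_erase.mpr ⟨hac.symm, hc.1⟩),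
    card_erase_of_mem ha.1]
  omega

lemma eq_of_middle_eq {F G₁ G₂ : Finset α} (hF : ¬ HasButterfly F) (hG₁ : G₁ ⊆ F) (hG₂ : G₂ ⊆ F)
    {a₁ c₁ a₂ c₂ : α} (ha₁ : IsLeast (G₁ : Set α) a₁) (hc₁ : IsGreatest (G₁ : Set α) c₁)
    (ha₂ : IsLeast (G₂ : Set α) a₂) (hc₂ : IsGreatest (G₂ : Set α) c₂)
    (hne : (middle G₁).Nonempty) (h : middle G₁ = middle G₂) : G₁ = G₂ := by
  obtain ⟨x, hx⟩ := hne
  obtain ⟨hax₁, hxc₁⟩ := lt_and_lt_of_mem_middle ha₁ hc₁ hx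
  obtain ⟨hax₂, hxc₂⟩ := lt_and_lt_of_mem_middle ha₂ hc₂ (h ▸ hx)
  obtain ⟨rfl, rfl⟩ := eq_and_eq_of_lt_of_lt hF (hG₁ ha₁.1) (hG₂ ha₂.1)
    (hG₁ (middle_subset G₁ hx)) (hG₁ hc₁.1) (hG₂ hc₂.1) hax₁ hxc₁ hax₂ hxc₂
  rw [← insert_insert_middle ha₁ hc₁, ← insert_insert_middle ha₂ hc₂, h]

end Butterfly

lemma isCopy_iff_card {P : Type} [PartialOrder P] [Fintype P] {n : ℕ}
    {G : Finset (Finset (Fin n))} :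
    IsCopy P G ↔ #G = Fintype.card P ∧
      ∃ φ : P → Finset (Fin n), univ.image φ = G ∧ ∀ x y, x ≤ y → φ x ⊆ φ y := by
  constructor
  · rintro ⟨φ, hinj, himg, hmono⟩
    exact ⟨himg ▸ card_image_of_injective _ hinj, φ, himg, hmono⟩
  · rintro ⟨hcard, φ, himg, hmono⟩
    refine ⟨φ, ?_, himg, hmono⟩
    rw [← Set.injOn_univ, ← coe_univ, ← card_image_iff, himg, hcard, card_univ]

namespace KP

variable {s : ℕ} {r : Fin s → ℕ}

lemma le_of_fst_lt {x y : KP r} (h : x.1 < y.1) : x ≤ y := Or.inr h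

lemma card_eq_sum : Fintype.card (KP r) = ∑ i, r i :=
  (Fintype.card_sigma (α := fun i => Fin (r i))).trans (by simp)

end KP

def butterflyMap {α : Type} (a b c d : α) (x : Butterfly) : α :=
  if x.1 = 0 then (if x.2.val = 0 then a else b) else (if x.2.val = 0 then c else d)

lemma isCopy_butterflyMap {n : ℕ} {a b c d : Finset (Fin n)} (hab : a ≠ b) (hcd : c ≠ d)
    (hac : a < c) (had : a < d) (hbc : b < c) (hbd : b < d) :
    IsCopy Butterfly {a, b, c, d} := by
  refine isCopy_iff_card.mpr ⟨?_, butterflyMap a b c d, ?_, ?_⟩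
  · rw [show Fintype.card Butterfly = 4 by simp [KP.card_eq_sum], card_eq_four]
    exact ⟨a, b, c, d, hab, hac.ne, had.ne, hbc.ne, hbd.ne, hcd, rfl⟩
  · apply Subset.antisymm
    · intro X hX
      obtain ⟨x, -, rfl⟩ := mem_image.mp hX
      unfold butterflyMap
      split_ifs <;> simp
    · intro X hX
      simp only [mem_insert, mem_singleton] at hX
      rcases hX with rfl | rfl | rfl | rfl
      exacts [mem_image.mpr ⟨⟨0, 0, by simp⟩, mem_univ _, rfl⟩,
        mem_image.mpr ⟨⟨0, 1, by simp⟩, mem_univ _, rfl⟩,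
        mem_image.mpr ⟨⟨1, 0, by simp⟩, mem_univ _, rfl⟩,
        mem_image.mpr ⟨⟨1, 1, by simp⟩, mem_univ _, rfl⟩]
  · rintro x y (rfl | hxy)
    · exact subset_rfl
    · have hlt := Fin.lt_def.mp hxy
      have hx : x.1 = 0 := by rw [Fin.ext_iff, Fin.val_zero]; omega
      have hy : y.1 ≠ 0 := fun h => by simp [h] at hlt
      unfold butterflyMap
      simp only [hx, hy, if_true, if_false]
      split_ifs
      exacts [hac.le, had.le, hbc.le, hbd.le]

lemma IsCopy.hasButterfly {n : ℕ} {G F : Finset (Finset (Fin n))} (hG : IsCopy Butterfly G)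
    (hGF : G ⊆ F) : HasButterfly F := by
  obtain ⟨φ, hinj, rfl, hmono⟩ := hG
  have mem : ∀ x, φ x ∈ F := fun x => hGF (mem_image_of_mem φ (mem_univ x))
  have ne_of_snd_ne : ∀ x y : Butterfly, x.2.val ≠ y.2.val → φ x ≠ φ y := fun x y h =>
    hinj.ne (ne_of_apply_ne (fun z : Butterfly => z.2.val) h)
  have strict : ∀ x y : Butterfly, x.1 < y.1 → φ x < φ y := fun x y h =>
    lt_of_le_of_ne (hmono x y (KP.le_of_fst_lt h)) (hinj.ne (ne_of_apply_ne Sigma.fst h.ne))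
  exact ⟨φ ⟨0, 0, by simp⟩, mem _, φ ⟨0, 1, by simp⟩, mem _, φ ⟨1, 0, by simp⟩, mem _,
    φ ⟨1, 1, by simp⟩, mem _, ne_of_snd_ne _ _ (by decide), ne_of_snd_ne _ _ (by decide),
    strict _ _ (by decide), strict _ _ (by decide), strict _ _ (by decide),
    strict _ _ (by decide)⟩

lemma copyCount_butterfly_eq_zero_iff {n : ℕ} {F : Finset (Finset (Fin n))} :
    copyCount Butterfly F = 0 ↔ ¬ HasButterfly F := by
  rw [copyCount, card_eq_zero, filter_eq_empty_iff]
  constructor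
  · rintro h ⟨a, ha, b, hb, c, hc, d, hd, hab, hcd, hac, had, hbc, hbd⟩
    refine h (mem_powerset.mpr ?_) (isCopy_butterflyMap hab hcd hac had hbc hbd)
    simp only [insert_subset_iff, singleton_subset_iff]
    exact ⟨ha, hb, hc, hd⟩
  · intro h G hG hcopy
    exact h (hcopy.hasButterfly (mem_powerset.mp hG))

def diamondBot (r : ℕ) : DiamondPoset r := ⟨0, 0, by simp⟩

def diamondTop (r : ℕ) : DiamondPoset r := ⟨2, 0, by simp⟩

lemma diamondBot_le {r : ℕ} (x : DiamondPoset r) : diamondBot r ≤ x := by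
  rcases x with ⟨i, j, hj⟩
  fin_cases i
  · obtain rfl : j = 0 := by simpa using hj
    rfl
  all_goals exact KP.le_of_fst_lt (by simp [diamondBot, Fin.lt_def])

lemma le_diamondTop {r : ℕ} (x : DiamondPoset r) : x ≤ diamondTop r := by
  rcases x with ⟨i, j, hj⟩
  fin_cases i
  rotate_left 2
  · obtain rfl : j = 0 := by simpa using hj
    rfl
  all_goals exact KP.le_of_fst_lt (by simp [diamondTop, Fin.lt_def])

lemma diamondBot_ne_diamondTop (r : ℕ) : diamondBot r ≠ diamondTop r :=
  fun h => by simpa [diamondBot, diamondTop] using congrArg Sigma.fst h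

lemma card_diamondPoset (r : ℕ) : Fintype.card (DiamondPoset r) = r + 2 := by
  simp [KP.card_eq_sum, Fin.sum_univ_three]
  omega

def diamondMap {α : Type} (a c : α) {r : ℕ} (g : Fin r → α) : DiamondPoset r → α
  | ⟨0, _⟩ => a
  | ⟨1, j⟩ => g j
  | ⟨2, _⟩ => c

lemma isCopy_diamondPoset_iff {n r : ℕ} {G : Finset (Finset (Fin n))} :
    IsCopy (DiamondPoset r) G ↔ #G = r + 2 ∧
      ∃ a c, a ≠ c ∧ IsLeast (G : Set (Finset (Fin n))) a ∧ IsGreatest (G : Set _) c := by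
  constructor
  · rintro ⟨φ, hinj, rfl, hmono⟩
    have mem : ∀ x, φ x ∈ (univ.image φ : Set _) := fun x => mem_image_of_mem φ (mem_univ x)
    refine ⟨(card_image_of_injective _ hinj).trans (card_diamondPoset r), φ (diamondBot r),
      φ (diamondTop r), hinj.ne (diamondBot_ne_diamondTop r), ⟨mem _, ?_⟩, ⟨mem _, ?_⟩⟩
    all_goals
      rintro _ hX
      obtain ⟨x, -, rfl⟩ := mem_image.mp hX
    exacts [hmono _ _ (diamondBot_le x), hmono _ _ (le_diamondTop x)]
  · rintro ⟨hcard, a, c, hac, ha, hc⟩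
    have hmiddle : #(middle G) = r := by
      have := card_middle hac ha hc
      omega
    set e := (middle G).equivFinOfCardEq hmiddle
    set φ := diamondMap a c fun j => (e.symm j : Finset (Fin n))
    have mem : ∀ x, φ x ∈ G := by
      rintro ⟨i, j⟩
      fin_cases i
      exacts [ha.1, middle_subset G (e.symm j).2, hc.1]
    refine isCopy_iff_card.mpr ⟨hcard.trans (card_diamondPoset r).symm, φ, ?_, ?_⟩
    · refine Subset.antisymm (fun X hX => ?_) fun X hX => ?_
      · obtain ⟨x, -, rfl⟩ := mem_image.mp hX
        exact mem x
      rw [← insert_insert_middle ha hc, mem_insert, mem_insert] at hX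
      rcases hX with rfl | rfl | hX
      · exact mem_image.mpr ⟨diamondBot r, mem_univ _, rfl⟩
      · exact mem_image.mpr ⟨diamondTop r, mem_univ _, rfl⟩
      · exact mem_image.mpr ⟨⟨1, e ⟨X, hX⟩⟩, mem_univ _, by simp [φ, diamondMap]⟩
    · rintro ⟨i, j⟩ ⟨i', j'⟩ (h | h)
      · rw [h]
      fin_cases i <;> fin_cases i' <;> simp [Fin.lt_def] at h
      exacts [ha.2 (mem _), ha.2 (mem _), hc.2 (mem _)]

theorem copyCount_diamondPoset_le {n r : ℕ} (hr : 1 ≤ r) {F : Finset (Finset (Fin n))}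
    (hF : ¬ HasButterfly F) : copyCount (DiamondPoset r) F ≤ (n.choose (n / 2)).choose r := by
  have sperner : #(middle F) ≤ n.choose (n / 2) := by
    simpa using (isAntichain_middle hF).sperner
  calc copyCount (DiamondPoset r) F ≤ #((middle F).powersetCard r) := by
        refine card_le_card_of_injOn middle (fun G hG => ?_) fun G₁ hG₁ G₂ hG₂ h => ?_
        · obtain ⟨hGF, hcard, a, c, hac, ha, hc⟩ :=
            And.imp_right isCopy_diamondPoset_iff.mp (mem_filter.mp hG)
          refine mem_powersetCard.mpr ⟨middle_mono (mem_powerset.mp hGF), ?_⟩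
          have := card_middle hac ha hc
          omega
        · obtain ⟨hG₁F, hcard, a₁, c₁, hac₁, ha₁, hc₁⟩ :=
            And.imp_right isCopy_diamondPoset_iff.mp (mem_filter.mp hG₁)
          obtain ⟨hG₂F, -, a₂, c₂, -, ha₂, hc₂⟩ :=
            And.imp_right isCopy_diamondPoset_iff.mp (mem_filter.mp hG₂)
          refine eq_of_middle_eq hF (mem_powerset.mp hG₁F) (mem_powerset.mp hG₂F) ha₁ hc₁ ha₂ hc₂
            (card_pos.mp ?_) h
          have := card_middle hac₁ ha₁ hc₁
          omega
    _ = (#(middle F)).choose r := card_powersetCard _ _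
    _ ≤ (n.choose (n / 2)).choose r := Nat.choose_le_choose r sperner

lemma card_level (n k : ℕ) : #(level n k) = n.choose k := by
  rw [show level n k = powersetCard k univ by ext; simp [level], card_powersetCard, card_fin]

def extremalFamily (n : ℕ) : Finset (Finset (Fin n)) :=
  insert ∅ (insert univ (level n (n / 2)))

lemma not_hasButterfly_extremalFamily (n : ℕ) : ¬ HasButterfly (extremalFamily n) := by
  refine not_hasButterfly_of_lt_imp (u := ∅) (v := univ) fun x hx y hy hxy => ?_
  simp only [extremalFamily, level, mem_insert, mem_filter, mem_univ, true_and] at hx hy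
  rcases hx with rfl | rfl | hx
  · exact Or.inl rfl
  · exact absurd (hxy.trans_le (subset_univ y)) (lt_irrefl _)
  rcases hy with rfl | rfl | hy
  · exact absurd hxy (not_ssubset_empty x)
  · exact Or.inr rfl
  · exact absurd (card_lt_card hxy) (by omega)

lemma isCopy_diamondPoset_insert_empty_insert_univ {n : ℕ} (hn : n ≠ 0)
    {S : Finset (Finset (Fin n))} (hempty : ∅ ∉ S) (huniv : univ ∉ S) :
    IsCopy (DiamondPoset #S) (insert ∅ (insert univ S)) := by
  have empty_ne_univ : (∅ : Finset (Fin n)) ≠ univ :=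
    (univ_nonempty_iff.mpr ⟨⟨0, by omega⟩⟩).ne_empty.symm
  have empty_notMem : ∅ ∉ insert univ S := by
    rw [mem_insert, not_or]
    exact ⟨empty_ne_univ, hempty⟩
  rw [isCopy_diamondPoset_iff, card_insert_of_notMem empty_notMem, card_insert_of_notMem huniv]
  exact ⟨rfl, ∅, univ, empty_ne_univ, ⟨by simp, fun X _ => empty_subset X⟩,
    ⟨by simp, fun X _ => subset_univ X⟩⟩

lemma le_copyCount_extremalFamily {n : ℕ} (hn : 2 ≤ n) (r : ℕ) :
    (n.choose (n / 2)).choose r ≤ copyCount (DiamondPoset r) (extremalFamily n) := by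
  have empty_notMem : ∅ ∉ level n (n / 2) := by
    simp only [level, mem_filter, card_empty]
    omega
  have univ_notMem : univ ∉ level n (n / 2) := by
    simp only [level, mem_filter, card_univ, Fintype.card_fin]
    omega
  rw [← card_level n (n / 2), ← card_powersetCard]
  refine card_le_card_of_injOn (fun S => insert ∅ (insert univ S)) (fun S hS => ?_)
    fun S₁ hS₁ S₂ hS₂ h => ?_
  · obtain ⟨hSlevel, rfl⟩ := mem_powersetCard.mp hS
    refine mem_filter.mpr ⟨mem_powerset.mpr ?_, isCopy_diamondPoset_insert_empty_insert_univ
      (by omega) (notMem_mono hSlevel empty_notMem) (notMem_mono hSlevel univ_notMem)⟩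
    exact insert_subset_insert _ (insert_subset_insert _ hSlevel)
  · have recover : ∀ S ⊆ level n (n / 2),
        (insert ∅ (insert univ S)).filter (fun X => X ∈ level n (n / 2)) = S := fun S hS => by
      rw [filter_insert, filter_insert, filter_true_of_mem fun X hX => hS hX,
        if_neg univ_notMem, if_neg empty_notMem]
    rw [← recover S₁ (mem_powersetCard.mp hS₁).1, ← recover S₂ (mem_powersetCard.mp hS₂).1]
    exact congrArg (filter _) h

theorem statement2 (n r : ℕ) (hn : 2 ≤ n) (hr : 1 ≤ r) :
    La n Butterfly (DiamondPoset r) = (n.choose (n / 2)).choose r := by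
  refine le_antisymm (Finset.sup_le fun F hF => ?_) ?_
  · exact copyCount_diamondPoset_le hr (copyCount_butterfly_eq_zero_iff.mp (mem_filter.mp hF).2)
  · have extremal_free : copyCount Butterfly (extremalFamily n) = 0 :=
      copyCount_butterfly_eq_zero_iff.mpr (not_hasButterfly_extremalFamily n)
    exact (le_copyCount_extremalFamily hn r).trans
      (le_sup (f := copyCount _) (mem_filter.mpr ⟨mem_univ _, extremal_free⟩))

end
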